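/- Let p be a probability distribution on {0,1}^n with Σ_x p(x)² ≤ α/2^n for some α ≥ 1, let 0 < δ < 1, let c ≥ 1 be an integer, set F = 10(n^c + 1)/δ, and let 0 ≤ λ ≤ 1. Suppose p̂' : {0,1}^n → ℝ satisfies |p̂(s) − p̂'(s)| ≤ 1/(2^n F) for every s with |s| ≤ c. Then 2^{2n} Σ_{s: |s| ≤ c} (1−λ)^{2|s|} p̂'(s)² ≤ α + 1. -/

import Mathlib

/-!
For `|s| ≤ c` the approximation error `ε = 1/(2^n F)` and the bound `|p̂(s)| ≤ 2^{-n}`, valid for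
any probability distribution, give `p̂'(s)² ≤ p̂(s)² + 2ε/2^n + ε²`, while the damping factors
`(1-λ)^{2|s|}` are at most `1`. Parseval bounds `Σ_s p̂(s)²` by `2^{-n} Σ_x p(x)² ≤ α/2^{2n}`, and the
error terms of the at most `n^c + 1 ≤ F/10` strings of weight `≤ c` add up, after scaling by
`2^{2n}`, to at most `(n^c + 1)(2F + 1)/F² ≤ 1`.
-/

/-- Dot product of two bit strings, `s·x = Σ_j s_j x_j`. -/
def dot {n : ℕ} (s x : Fin n → Bool) : ℕ :=
  (Finset.univ.filter fun j => s j && x j).card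

/-- Hamming weight `|s| = Σ_j s_j`. -/
def wt {n : ℕ} (s : Fin n → Bool) : ℕ :=
  (Finset.univ.filter fun j => s j).card

/-- Fourier coefficient `f̂(s) = 2^{-n} Σ_x f(x) (-1)^{s·x}`. -/
noncomputable def fhat {n : ℕ} (f : (Fin n → Bool) → ℝ) (s : Fin n → Bool) : ℝ :=
  (1 / 2 ^ n) * ∑ x, f x * (-1 : ℝ) ^ dot s x

open Finset

lemma neg_one_pow_dot {n : ℕ} (s x : Fin n → Bool) :
    (-1 : ℝ) ^ dot s x = ∏ j, if s j && x j then -1 else 1 := by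
  rw [dot, ← prod_const, prod_filter]

lemma sum_neg_one_pow_dot_mul {n : ℕ} (x y : Fin n → Bool) :
    ∑ s : Fin n → Bool, (-1 : ℝ) ^ dot s x * (-1) ^ dot s y = if x = y then 2 ^ n else 0 := by
  have hcoord : ∀ j, ∑ b : Bool,
      (if b && x j then (-1 : ℝ) else 1) * (if b && y j then -1 else 1)
        = if x j = y j then 2 else 0 := by
    intro j
    cases x j <;> cases y j <;> norm_num
  simp_rw [neg_one_pow_dot, ← prod_mul_distrib]
  rw [← Fintype.prod_sum (fun j (b : Bool) =>
    (if b && x j then (-1 : ℝ) else 1) * (if b && y j then -1 else 1))]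
  simp_rw [hcoord]
  split_ifs with hxy
  · simp [hxy]
  · obtain ⟨j, hj⟩ := Function.ne_iff.mp hxy
    exact prod_eq_zero (mem_univ j) (if_neg hj)

lemma sum_fhat_sq {n : ℕ} (f : (Fin n → Bool) → ℝ) :
    ∑ s, fhat f s ^ 2 = 1 / 2 ^ n * ∑ x, f x ^ 2 := by
  have hexpand : ∀ s, fhat f s ^ 2
      = (1 / 2 ^ n) ^ 2 * ∑ x, ∑ y, f x * f y * ((-1 : ℝ) ^ dot s x * (-1) ^ dot s y) := by
    intro s
    rw [fhat, mul_pow, sq (∑ x, _), sum_mul_sum]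
    congr 1
    exact sum_congr rfl fun x _ => sum_congr rfl fun y _ => by ring
  calc ∑ s, fhat f s ^ 2
      = (1 / 2 ^ n) ^ 2 * ∑ x, ∑ y, f x * f y * ∑ s, (-1 : ℝ) ^ dot s x * (-1) ^ dot s y := by
        simp_rw [hexpand, ← mul_sum]
        congr 1
        simp_rw [mul_sum]
        rw [sum_comm]
        exact sum_congr rfl fun x _ => sum_comm
    _ = (1 / 2 ^ n) ^ 2 * ∑ x, 2 ^ n * f x ^ 2 := by
        simp_rw [sum_neg_one_pow_dot_mul, mul_ite, mul_zero, sum_ite_eq, mem_univ, if_true, sq]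
        ring_nf
    _ = 1 / 2 ^ n * ∑ x, f x ^ 2 := by
        rw [← mul_sum]
        field_simp

lemma card_filter_wt_le (n c : ℕ) : #{s : Fin n → Bool | wt s ≤ c} ≤ n ^ c + 1 := by
  classical
  -- a nonzero string of weight `≤ c` is the indicator of the range of some `Fin c → Fin n`
  let indicator : (Fin c → Fin n) → Fin n → Bool := fun f j => decide (∃ i, f i = j)
  have hcover : ({s : Fin n → Bool | wt s ≤ c} : Finset _) ⊆
      insert (fun _ => false) (univ.image indicator) := by
    intro s hs
    rw [mem_filter] at hs
    rw [mem_insert, mem_image]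
    by_cases hs0 : s = fun _ => false
    · exact Or.inl hs0
    right
    set A := univ.filter fun j => s j
    have hA : A.Nonempty := by
      obtain ⟨j, hj⟩ := Function.ne_iff.mp hs0
      exact ⟨j, by simpa [A] using hj⟩
    obtain ⟨g, hg⟩ : ∃ g : Fin c → A, Function.Surjective g :=
      Function.exists_surjective_iff.mpr
        ⟨⟨fun _ => ⟨_, hA.choose_spec⟩⟩,
          Function.Embedding.nonempty_of_card_le
            (by rw [Fintype.card_coe, Fintype.card_fin]; exact hs.2)⟩
    refine ⟨fun i => g i, mem_univ _, funext fun j => ?_⟩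
    have hrange : (∃ i, (g i : Fin n) = j) ↔ j ∈ A :=
      ⟨fun ⟨i, hi⟩ => hi ▸ (g i).2, fun hj => (hg ⟨j, hj⟩).imp fun i hi => congrArg Subtype.val hi⟩
    rw [Bool.eq_iff_iff, decide_eq_true_iff, hrange, mem_filter]
    exact and_iff_right (mem_univ j)
  calc #{s : Fin n → Bool | wt s ≤ c}
      ≤ #(univ.image indicator) + 1 := (card_le_card hcover).trans (card_insert_le _ _)
    _ ≤ n ^ c + 1 := by
      gcongr
      exact card_image_le.trans (by simp)

lemma abs_fhat_le {n : ℕ} (f : (Fin n → Bool) → ℝ) (s : Fin n → Bool) :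
    |fhat f s| ≤ 1 / 2 ^ n * ∑ x, |f x| := by
  rw [fhat, abs_mul, abs_of_pos (by positivity : (0 : ℝ) < 1 / 2 ^ n)]
  gcongr
  refine (abs_sum_le_sum_abs _ _).trans_eq (sum_congr rfl fun x _ => ?_)
  rw [abs_mul, abs_pow, abs_neg, abs_one, one_pow, mul_one]

lemma sq_le_sq_add_of_abs_sub_le {a b K ε : ℝ} (hab : |a - b| ≤ ε) (ha : |a| ≤ K) :
    b ^ 2 ≤ a ^ 2 + (2 * K * ε + ε ^ 2) := by
  have hb : |b| ≤ |a| + ε := by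
    calc |b| = |a - (a - b)| := by ring_nf
      _ ≤ |a| + |a - b| := abs_sub _ _
      _ ≤ |a| + ε := by gcongr
  have hε : 0 ≤ ε := (abs_nonneg _).trans hab
  calc b ^ 2 = |b| ^ 2 := (sq_abs b).symm
    _ ≤ (|a| + ε) ^ 2 := by gcongr
    _ ≤ a ^ 2 + (2 * K * ε + ε ^ 2) := by
      rw [add_sq, sq_abs]
      nlinarith

lemma sum_fhat_sq_le {n : ℕ} (f : (Fin n → Bool) → ℝ) (T : Finset (Fin n → Bool)) {α : ℝ}
    (hf : ∑ x, f x ^ 2 ≤ α / 2 ^ n) : ∑ s ∈ T, fhat f s ^ 2 ≤ α / (2 ^ n) ^ 2 := by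
  calc ∑ s ∈ T, fhat f s ^ 2 ≤ ∑ s, fhat f s ^ 2 :=
        sum_le_sum_of_subset_of_nonneg (subset_univ T) fun s _ _ => sq_nonneg _
    _ = 1 / 2 ^ n * ∑ x, f x ^ 2 := sum_fhat_sq f
    _ ≤ 1 / 2 ^ n * (α / 2 ^ n) := by gcongr
    _ = α / (2 ^ n) ^ 2 := by ring

lemma mul_error_le_one {N F : ℝ} (hN : 0 ≤ N) (hNF : 10 * N ≤ F) (hF : 10 ≤ F) :
    N * (2 / F + 1 / F ^ 2) ≤ 1 := by
  rw [div_add_div _ _ (by positivity) (by positivity), mul_div_assoc', div_le_one (by positivity)]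
  nlinarith

theorem stmt12_general {n : ℕ} (p phat' : (Fin n → Bool) → ℝ) (α δ lam : ℝ) (c : ℕ)
    (hp0 : ∀ x, 0 ≤ p x) (hp1 : ∑ x, p x = 1)
    (hp2 : ∑ x, p x ^ 2 ≤ α / 2 ^ n)
    (hδ0 : 0 < δ) (hδ1 : δ < 1)
    (F : ℝ) (hF : F = 10 * ((n : ℝ) ^ c + 1) / δ)
    (hlam0 : 0 ≤ lam) (hlam1 : lam ≤ 1)
    (happrox : ∀ s, wt s ≤ c → |fhat p s - phat' s| ≤ 1 / (2 ^ n * F)) :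
    2 ^ (2 * n) *
        ∑ s ∈ Finset.univ.filter (fun s : Fin n → Bool => wt s ≤ c),
          (1 - lam) ^ (2 * wt s) * phat' s ^ 2
      ≤ α + 1 := by
  set T := Finset.univ.filter (fun s : Fin n → Bool => wt s ≤ c)
  set K : ℝ := 2 ^ n
  set ε := 1 / (K * F) with hε
  have hK : 0 < K := by positivity
  have hnc : 0 ≤ (n : ℝ) ^ c := by positivity
  have hFn : 10 * ((n : ℝ) ^ c + 1) ≤ F := by
    rw [hF, le_div_iff₀ hδ0]
    nlinarith
  have hT : (#T : ℝ) ≤ n ^ c + 1 := by exact_mod_cast card_filter_wt_le n c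
  have hF0 : 0 < F := by linarith
  have hterm : ∀ s ∈ T,
      (1 - lam) ^ (2 * wt s) * phat' s ^ 2 ≤ fhat p s ^ 2 + (2 * (1 / K) * ε + ε ^ 2) := by
    intro s hs
    have hpK : |fhat p s| ≤ 1 / K := by
      simpa [abs_of_nonneg (hp0 _), hp1] using abs_fhat_le p s
    calc (1 - lam) ^ (2 * wt s) * phat' s ^ 2 ≤ phat' s ^ 2 :=
          mul_le_of_le_one_left (sq_nonneg _) (pow_le_one₀ (by linarith) (by linarith))
      _ ≤ _ := sq_le_sq_add_of_abs_sub_le (happrox s (mem_filter.mp hs).2) hpK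
  calc 2 ^ (2 * n) * ∑ s ∈ T, (1 - lam) ^ (2 * wt s) * phat' s ^ 2
      ≤ K ^ 2 * (α / K ^ 2 + #T * (2 * (1 / K) * ε + ε ^ 2)) := by
        rw [pow_mul']
        gcongr
        refine (sum_le_sum hterm).trans ?_
        rw [sum_add_distrib, sum_const, nsmul_eq_mul]
        gcongr
        exact sum_fhat_sq_le p T hp2
    _ = α + #T * (2 / F + 1 / F ^ 2) := by
        rw [hε]
        field_simp
    _ ≤ α + 1 := by
        linarith [mul_error_le_one (N := #T) (F := F) (by positivity) (by linarith) (by linarith)]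

theorem stmt12 {n : ℕ} (p phat' : (Fin n → Bool) → ℝ) (α δ lam : ℝ) (c : ℕ)
    (hp0 : ∀ x, 0 ≤ p x) (hp1 : ∑ x, p x = 1)
    (hα : 1 ≤ α) (hp2 : ∑ x, p x ^ 2 ≤ α / 2 ^ n)
    (hδ0 : 0 < δ) (hδ1 : δ < 1) (hc : 1 ≤ c)
    (F : ℝ) (hF : F = 10 * ((n : ℝ) ^ c + 1) / δ)
    (hlam0 : 0 ≤ lam) (hlam1 : lam ≤ 1)
    (happrox : ∀ s, wt s ≤ c → |fhat p s - phat' s| ≤ 1 / (2 ^ n * F)) :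
    2 ^ (2 * n) *
        ∑ s ∈ Finset.univ.filter (fun s : Fin n → Bool => wt s ≤ c),
          (1 - lam) ^ (2 * wt s) * phat' s ^ 2
      ≤ α + 1 :=
  stmt12_general p phat' α δ lam c hp0 hp1 hp2 hδ0 hδ1 F hF hlam0 hlam1 happrox
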